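/- arXiv:1007.0941 — 8 statements merged into one kernel-verified Lean document; each statement's English description precedes it below -/
import Mathlib

section
/- In a q-uniformly smooth real Banach space E with smoothness constant d_q, if A : E → E is L-Lipschitzian and strongly accretive with constant η > 0, T : E → E is nonexpansive, 0 < λ < (qη/(L^q d_q))^{1/(q−1)}, and t ∈ (0,1), then for all x, y ∈ E: ‖(I − tλA)Tx − (I − tλA)Ty‖ ≤ (1 − tλ(qη − d_q L^q λ^{q−1}))^{1/q} ‖x − y‖, so in particular (I − tλA)T is a strict contraction. -/
/-- In a `q`-uniformly smooth space (constant `d_q`), for `A`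
`L`-Lipschitzian and strongly accretive with constant `η`, `T` nonexpansive,
`0 < λ < (qη/(L^q d_q))^(1/(q-1))` and `t ∈ (0,1)`, the map `(I - tλA)∘T` satisfies
`‖(I - tλA)Tx - (I - tλA)Ty‖ ≤ (1 - tλ(qη - d_q L^q λ^(q-1)))^(1/q) ‖x - y‖`. -/
theorem contraction_estimate
    {E : Type*} [NormedAddCommGroup E] [NormedSpace ℝ E]
    (q : ℝ) (hq : 1 < q) (jq : E → E →L[ℝ] ℝ)
    (hjq : ∀ z : E, jq z z = ‖z‖ ^ q ∧ ‖jq z‖ = ‖z‖ ^ (q - 1))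
    (dq : ℝ) (hdq : 0 < dq)
    (hsmooth : ∀ x y : E, ‖x + y‖ ^ q ≤ ‖x‖ ^ q + q * jq x y + dq * ‖y‖ ^ q)
    (A : E → E) (L : ℝ) (hL : 0 < L)
    (hLip : ∀ x y : E, ‖A x - A y‖ ≤ L * ‖x - y‖)
    (η : ℝ) (hη : 0 < η)
    (hA : ∀ x y : E, η * ‖x - y‖ ^ q ≤ jq (x - y) (A x - A y))
    (T : E → E) (hT : ∀ x y : E, ‖T x - T y‖ ≤ ‖x - y‖)
    (lam : ℝ) (hlam : 0 < lam) (hlam' : lam < (q * η / (L ^ q * dq)) ^ (1 / (q - 1)))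
    (t : ℝ) (ht : t ∈ Set.Ioo (0 : ℝ) 1) :
    ∀ x y : E,
      ‖(T x - (t * lam) • A (T x)) - (T y - (t * lam) • A (T y))‖ ≤
        (1 - t * lam * (q * η - dq * L ^ q * lam ^ (q - 1))) ^ (1 / q) * ‖x - y‖ := by
  obtain ⟨ht0, ht1⟩ := ht
  have hq0 : (0:ℝ) < q := by linarith
  set s : ℝ := t * lam with hs
  have hs0 : 0 < s := mul_pos ht0 hlam
  set c : ℝ := 1 - t * lam * (q * η - dq * L ^ q * lam ^ (q - 1)) with hc
  have key : ∀ a b : E,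
      ‖(a - s • A a) - (b - s • A b)‖ ^ q ≤ c * ‖a - b‖ ^ q := by
    intro a b
    have h1 : (a - s • A a) - (b - s • A b) = (a - b) + ((-s) • (A a - A b)) := by
      rw [neg_smul, smul_sub]; abel
    rw [h1]
    have h2 := hsmooth (a - b) ((-s) • (A a - A b))
    have hj : (jq (a - b)) ((-s) • (A a - A b)) = -s * jq (a - b) (A a - A b) := by
      rw [map_smul]; simp
    have hA' := hA a b
    have hnorm : ‖(-s) • (A a - A b)‖ = s * ‖A a - A b‖ := by
      rw [norm_smul, Real.norm_eq_abs, abs_neg, abs_of_pos hs0]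
    have hAb : ‖A a - A b‖ ^ q ≤ L ^ q * ‖a - b‖ ^ q := by
      calc ‖A a - A b‖ ^ q ≤ (L * ‖a - b‖) ^ q :=
            Real.rpow_le_rpow (norm_nonneg _) (hLip a b) hq0.le
        _ = L ^ q * ‖a - b‖ ^ q := Real.mul_rpow hL.le (norm_nonneg _)
    have hsq : s ^ q ≤ t * lam ^ q := by
      have e1 : s ^ q = t ^ q * lam ^ q := Real.mul_rpow ht0.le hlam.le
      have e2 : t ^ q ≤ t := by
        have := Real.rpow_le_rpow_of_exponent_ge ht0 ht1.le hq.le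
        rwa [Real.rpow_one] at this
      have e3 : (0:ℝ) ≤ lam ^ q := Real.rpow_nonneg hlam.le q
      rw [e1]
      exact mul_le_mul_of_nonneg_right e2 e3
    have hlq : lam ^ q = lam * lam ^ (q - 1) := by
      have h := Real.rpow_add hlam 1 (q - 1)
      rw [Real.rpow_one, show (1:ℝ) + (q - 1) = q by ring] at h
      exact h
    have hns : ‖(-s) • (A a - A b)‖ ^ q = s ^ q * ‖A a - A b‖ ^ q := by
      rw [hnorm, Real.mul_rpow hs0.le (norm_nonneg _)]
    rw [hj, hns] at h2
    -- bound each term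
    have hJ : q * (-s * jq (a - b) (A a - A b)) ≤ -(q * s * η) * ‖a - b‖ ^ q := by
      have hqs : 0 ≤ q * s := by positivity
      nlinarith
    have hM : dq * (s ^ q * ‖A a - A b‖ ^ q) ≤ dq * (t * lam ^ q * (L ^ q * ‖a - b‖ ^ q)) := by
      have h0 : (0:ℝ) ≤ ‖A a - A b‖ ^ q := Real.rpow_nonneg (norm_nonneg _) q
      have h1 : s ^ q * ‖A a - A b‖ ^ q ≤ (t * lam ^ q) * (L ^ q * ‖a - b‖ ^ q) := by
        have h2 : (0:ℝ) ≤ L ^ q * ‖a - b‖ ^ q := by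
          have := Real.rpow_nonneg (norm_nonneg (a - b)) q
          have := Real.rpow_nonneg hL.le q
          positivity
        calc s ^ q * ‖A a - A b‖ ^ q ≤ (t * lam ^ q) * ‖A a - A b‖ ^ q :=
              mul_le_mul_of_nonneg_right hsq h0
          _ ≤ (t * lam ^ q) * (L ^ q * ‖a - b‖ ^ q) := by
              apply mul_le_mul_of_nonneg_left hAb
              positivity
      exact mul_le_mul_of_nonneg_left h1 hdq.le
    have hcN : ‖a - b‖ ^ q + -(q * s * η) * ‖a - b‖ ^ q
        + dq * (t * lam ^ q * (L ^ q * ‖a - b‖ ^ q)) = c * ‖a - b‖ ^ q := by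
      rw [hc, hs, hlq]; ring
    linarith [h2, hJ, hM]
  intro x y
  by_cases hxy : x = y
  · subst hxy; simp
  · have hxy' : (0:ℝ) < ‖x - y‖ := by
      rw [norm_pos_iff, sub_ne_zero]; exact hxy
    have hN : (0:ℝ) < ‖x - y‖ ^ q := Real.rpow_pos_of_pos hxy' q
    have hc0 : 0 ≤ c := by
      have h := key x y
      have h0 : (0:ℝ) ≤ ‖(x - s • A x) - (y - s • A y)‖ ^ q :=
        Real.rpow_nonneg (norm_nonneg _) q
      nlinarith
    have h2 := key (T x) (T y)
    have h3 : c * ‖T x - T y‖ ^ q ≤ c * ‖x - y‖ ^ q :=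
      mul_le_mul_of_nonneg_left
        (Real.rpow_le_rpow (norm_nonneg _) (hT x y) hq0.le) hc0
    have h4 : ‖(T x - s • A (T x)) - (T y - s • A (T y))‖ ^ q ≤ c * ‖x - y‖ ^ q :=
      h2.trans h3
    have h5 := Real.rpow_le_rpow
      (Real.rpow_nonneg (norm_nonneg _) q) h4 (by positivity : (0:ℝ) ≤ 1 / q)
    have e1 : (‖(T x - s • A (T x)) - (T y - s • A (T y))‖ ^ q) ^ (1 / q)
        = ‖(T x - s • A (T x)) - (T y - s • A (T y))‖ := by
      rw [← Real.rpow_mul (norm_nonneg _), mul_one_div, div_self hq0.ne', Real.rpow_one]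
    have e2 : (c * ‖x - y‖ ^ q) ^ (1 / q) = c ^ (1 / q) * ‖x - y‖ := by
      rw [Real.mul_rpow hc0 (Real.rpow_nonneg (norm_nonneg _) _),
        ← Real.rpow_mul (norm_nonneg _), mul_one_div, div_self hq0.ne', Real.rpow_one]
    rw [e1, e2] at h5
    exact h5
end

section
/- Let E be q-uniformly smooth, A : E → E L-Lipschitzian strongly accretive with constant η > 0, T : E → E nonexpansive with F(T) ≠ ∅, u ∈ E fixed, and 0 < λ < (qη/(L^q d_q))^{1/(q−1)}. Then for each t ∈ (0, min{1, 1/(qηλ − d_q (Lλ)^q)}), there exists a unique z_t ∈ E satisfying z_t = t u + (I − tλA) T z_t. -/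
set_option maxHeartbeats 1000000


/-- Under the hypotheses of the contraction estimate, for each
`t ∈ (0, min{1, 1/(qηλ - d_q(Lλ)^q)})` there exists a unique `z_t ∈ E` with
`z_t = t u + (I - tλA) T z_t`. -/
theorem implicit_scheme_exists_unique
    {E : Type*} [NormedAddCommGroup E] [NormedSpace ℝ E] [CompleteSpace E]
    (q : ℝ) (hq : 1 < q) (jq : E → E →L[ℝ] ℝ)
    (hjq : ∀ z : E, jq z z = ‖z‖ ^ q ∧ ‖jq z‖ = ‖z‖ ^ (q - 1))
    (dq : ℝ) (hdq : 0 < dq)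
    (hsmooth : ∀ x y : E, ‖x + y‖ ^ q ≤ ‖x‖ ^ q + q * jq x y + dq * ‖y‖ ^ q)
    (A : E → E) (L : ℝ) (hL : 0 < L)
    (hLip : ∀ x y : E, ‖A x - A y‖ ≤ L * ‖x - y‖)
    (η : ℝ) (hη : 0 < η)
    (hA : ∀ x y : E, η * ‖x - y‖ ^ q ≤ jq (x - y) (A x - A y))
    (T : E → E) (hT : ∀ x y : E, ‖T x - T y‖ ≤ ‖x - y‖)
    (hF : ∃ p : E, T p = p)
    (u : E)
    (lam : ℝ) (hlam : 0 < lam) (hlam' : lam < (q * η / (L ^ q * dq)) ^ (1 / (q - 1)))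
    (t : ℝ)
    (ht : t ∈ Set.Ioo (0 : ℝ) (min 1 (1 / (q * η * lam - dq * (L * lam) ^ q)))) :
    ∃! z : E, z = t • u + (T z - (t * lam) • A (T z)) := by
  obtain ⟨ht0, ht1'⟩ := ht
  have ht1 : t < 1 := lt_of_lt_of_le ht1' (min_le_left _ _)
  have hq0 : (0:ℝ) < q := lt_trans one_pos hq
  have hq1 : (0:ℝ) < q - 1 := by linarith
  obtain ⟨m, hm⟩ : ∃ m : ℝ, m = t * lam := ⟨_, rfl⟩
  have hm0 : 0 < m := hm ▸ mul_pos ht0 hlam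
  obtain ⟨c, hc⟩ : ∃ c : ℝ, c = 1 - q * m * η + dq * (m * L) ^ q := ⟨_, rfl⟩
  -- c < 1
  have hLq : (0:ℝ) < L ^ q := Real.rpow_pos_of_pos hL q
  have hB : (0:ℝ) < q * η / (L ^ q * dq) := by positivity
  have hlamq : lam ^ (q - 1) < q * η / (L ^ q * dq) := by
    have h := Real.rpow_lt_rpow (le_of_lt hlam) hlam' hq1
    rwa [← Real.rpow_mul (le_of_lt hB), one_div_mul_cancel (ne_of_gt hq1),
      Real.rpow_one] at h
  have hkey1 : dq * L ^ q * lam ^ (q - 1) < q * η := by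
    have h2 : lam ^ (q-1) * (L ^ q * dq) < q * η :=
      (lt_div_iff₀ (by positivity)).mp hlamq
    nlinarith [h2]
  have htq : t ^ (q - 1) < 1 := Real.rpow_lt_one (le_of_lt ht0) ht1 hq1
  have h1t : t ^ (q-1) * t = t ^ q := by
    rw [Real.rpow_sub ht0, Real.rpow_one]; field_simp
  have h1l : lam ^ (q-1) * lam = lam ^ q := by
    rw [Real.rpow_sub hlam, Real.rpow_one]; field_simp
  have hmq : (m * L) ^ q = (t ^ (q-1) * t) * (lam ^ (q-1) * lam) * L ^ q := by
    rw [hm, Real.mul_rpow (by positivity) (le_of_lt hL),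
      Real.mul_rpow (le_of_lt ht0) (le_of_lt hlam), h1t, h1l]
  have hc1 : c < 1 := by
    rw [hc, hmq, hm]
    have h5 : dq * L ^ q * lam ^ (q-1) * (t * lam) < q * η * (t * lam) :=
      mul_lt_mul_of_pos_right hkey1 (mul_pos ht0 hlam)
    have h6 : t ^ (q-1) * (dq * L ^ q * lam ^ (q-1) * (t * lam)) ≤
        1 * (dq * L ^ q * lam ^ (q-1) * (t * lam)) :=
      mul_le_mul_of_nonneg_right htq.le (by positivity)
    nlinarith [h5, h6]
  obtain ⟨k, hk⟩ : ∃ k : ℝ, k = (max c 0) ^ (1/q) := ⟨_, rfl⟩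
  have hmax0 : (0:ℝ) ≤ max c 0 := le_max_right _ _
  have hmax1 : max c 0 < 1 := max_lt hc1 one_pos
  have hk0 : 0 ≤ k := hk ▸ Real.rpow_nonneg hmax0 _
  have hk1 : k < 1 := hk ▸ Real.rpow_lt_one hmax0 hmax1 (by positivity)
  have hkq : k ^ q = max c 0 := by
    rw [hk, ← Real.rpow_mul hmax0, one_div_mul_cancel (ne_of_gt hq0), Real.rpow_one]
  -- the core contraction estimate for I - m A
  have key : ∀ x y : E, ‖(x - m • A x) - (y - m • A y)‖ ≤ k * ‖x - y‖ := by
    intro x y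
    have hre : (x - m • A x) - (y - m • A y) = (x - y) + (-m) • (A x - A y) := by
      module
    set w : E := x - y with hw
    set v : E := A x - A y with hv
    have h1 := hsmooth w ((-m) • v)
    have h2 : jq w ((-m) • v) = -m * jq w v := by
      rw [map_smul]; simp
    have h3 : ‖(-m) • v‖ = m * ‖v‖ := by
      rw [norm_smul, Real.norm_eq_abs, abs_neg, abs_of_pos hm0]
    have h4 : ‖(-m) • v‖ ^ q = m ^ q * ‖v‖ ^ q := by
      rw [h3, Real.mul_rpow (le_of_lt hm0) (norm_nonneg _)]
    have h5 : ‖v‖ ^ q ≤ L ^ q * ‖w‖ ^ q := by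
      calc ‖v‖ ^ q ≤ (L * ‖w‖) ^ q :=
            Real.rpow_le_rpow (norm_nonneg _) (hLip x y) (le_of_lt hq0)
        _ = L ^ q * ‖w‖ ^ q := Real.mul_rpow (le_of_lt hL) (norm_nonneg _)
    have h6 : η * ‖w‖ ^ q ≤ jq w v := hA x y
    have hmL : (m * L) ^ q = m ^ q * L ^ q :=
      Real.mul_rpow (le_of_lt hm0) (le_of_lt hL)
    have hmqpos : (0:ℝ) < m ^ q := Real.rpow_pos_of_pos hm0 q
    have hbound : ‖w + (-m) • v‖ ^ q ≤ c * ‖w‖ ^ q := by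
      rw [hc, hmL]
      calc ‖w + (-m) • v‖ ^ q ≤ ‖w‖ ^ q + q * jq w ((-m) • v) + dq * ‖(-m) • v‖ ^ q := h1
        _ = ‖w‖ ^ q - (q * m) * jq w v + dq * (m ^ q * ‖v‖ ^ q) := by rw [h2, h4]; ring
        _ ≤ (1 - q * m * η + dq * (m ^ q * L ^ q)) * ‖w‖ ^ q := by
            nlinarith [mul_le_mul_of_nonneg_left h6 (le_of_lt (mul_pos hq0 hm0)),
              mul_le_mul_of_nonneg_left h5 (le_of_lt (mul_pos hdq hmqpos))]
    have hbound2 : ‖w + (-m) • v‖ ^ q ≤ (k * ‖w‖) ^ q := by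
      rw [Real.mul_rpow hk0 (norm_nonneg _), hkq]
      calc ‖w + (-m) • v‖ ^ q ≤ c * ‖w‖ ^ q := hbound
        _ ≤ max c 0 * ‖w‖ ^ q := by
            have h7 : (0:ℝ) ≤ ‖w‖ ^ q := Real.rpow_nonneg (norm_nonneg w) q
            have h8 : c ≤ max c 0 := le_max_left c 0
            nlinarith [h7, h8]
    rw [hre]
    exact (Real.rpow_le_rpow_iff (norm_nonneg _) (by positivity) hq0).mp hbound2
  -- the full map and its contraction property
  obtain ⟨f, hf⟩ : ∃ f : E → E, f = fun z => t • u + (T z - (t * lam) • A (T z)) :=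
    ⟨_, rfl⟩
  have hcontr : ∀ x y : E, ‖f x - f y‖ ≤ k * ‖x - y‖ := by
    intro x y
    have h1 : f x - f y = (T x - m • A (T x)) - (T y - m • A (T y)) := by
      rw [hf, hm]; beta_reduce; abel
    rw [h1]
    calc ‖(T x - m • A (T x)) - (T y - m • A (T y))‖ ≤ k * ‖T x - T y‖ := key _ _
      _ ≤ k * ‖x - y‖ := mul_le_mul_of_nonneg_left (hT x y) hk0
  obtain ⟨p, hp⟩ := hF
  haveI : Nonempty E := ⟨p⟩
  have hlip : LipschitzWith ⟨k, hk0⟩ f := by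
    apply LipschitzWith.of_dist_le_mul
    intro x y
    rw [dist_eq_norm, dist_eq_norm]
    exact hcontr x y
  have hcw : ContractingWith ⟨k, hk0⟩ f := ⟨by exact_mod_cast hk1, hlip⟩
  set z := ContractingWith.fixedPoint f hcw with hzdef
  have h : f z = z := ContractingWith.fixedPoint_isFixedPt hcw
  refine ⟨z, ?_, ?_⟩
  · rw [hf] at h
    exact h.symm
  · intro y hy
    have hfix : Function.IsFixedPt f y := by
      show f y = y
      rw [hf]
      exact hy.symm
    exact hcw.fixedPoint_unique hfix
end

section
/- Under the hypotheses that A is L-Lipschitzian strongly accretive with constant η, T nonexpansive with p ∈ F(T), 0 < λ < (qη/(L^q d_q))^{1/(q−1)}, and z_t = t u + (I − tλA)Tz_t for t in (0, min{1, 1/(qηλ − d_q(Lλ)^q)}), the path is bounded: ‖z_t − p‖ ≤ q‖u − λAp‖ / (qηλ − d_q(Lλ)^q) for every such t. -/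
/-- The implicit path is bounded:
`‖z_t - p‖ ≤ q‖u - λAp‖ / (qηλ - d_q(Lλ)^q)` for every admissible `t`,
where `p ∈ F(T)` and `z_t = t u + (I - tλA) T z_t`. -/
theorem implicit_path_bounded
    {E : Type*} [NormedAddCommGroup E] [NormedSpace ℝ E]
    (q : ℝ) (hq : 1 < q) (jq : E → E →L[ℝ] ℝ)
    (hjq : ∀ z : E, jq z z = ‖z‖ ^ q ∧ ‖jq z‖ = ‖z‖ ^ (q - 1))
    (dq : ℝ) (hdq : 0 < dq)
    (hsmooth : ∀ x y : E, ‖x + y‖ ^ q ≤ ‖x‖ ^ q + q * jq x y + dq * ‖y‖ ^ q)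
    (hsub : ∀ x y : E, ‖x + y‖ ^ q ≤ ‖x‖ ^ q + q * jq (x + y) y)
    (A : E → E) (L : ℝ) (hL : 0 < L)
    (hLip : ∀ x y : E, ‖A x - A y‖ ≤ L * ‖x - y‖)
    (η : ℝ) (hη : 0 < η)
    (hA : ∀ x y : E, η * ‖x - y‖ ^ q ≤ jq (x - y) (A x - A y))
    (T : E → E) (hT : ∀ x y : E, ‖T x - T y‖ ≤ ‖x - y‖)
    (p : E) (hp : T p = p)
    (u : E)
    (lam : ℝ) (hlam : 0 < lam) (hlam' : lam < (q * η / (L ^ q * dq)) ^ (1 / (q - 1)))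
    (t : ℝ)
    (ht : t ∈ Set.Ioo (0 : ℝ) (min 1 (1 / (q * η * lam - dq * (L * lam) ^ q))))
    (z : E) (hz : z = t • u + (T z - (t * lam) • A (T z))) :
    ‖z - p‖ ≤ q * ‖u - lam • A p‖ / (q * η * lam - dq * (L * lam) ^ q) := by
  obtain ⟨ht0, htlt⟩ := ht
  have hq0 : 0 < q := by linarith
  have hq1 : 0 < q - 1 := by linarith
  -- positivity of the denominator
  have hLq : 0 < L ^ q := Real.rpow_pos_of_pos hL q
  have hbpos : 0 < q * η / (L ^ q * dq) := by positivity
  have hlamq : lam ^ (q - 1) < q * η / (L ^ q * dq) := by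
    have h := Real.rpow_lt_rpow hlam.le hlam' hq1
    rwa [← Real.rpow_mul hbpos.le, one_div, inv_mul_cancel₀ hq1.ne', Real.rpow_one] at h
  have hlamq' : lam ^ (q - 1) * (L ^ q * dq) < q * η := (lt_div_iff₀ (by positivity)).mp hlamq
  have hlamsplit : lam ^ q = lam ^ (q - 1) * lam := by
    rw [← Real.rpow_add_one hlam.ne' (q - 1)]; congr 1; ring
  have hLlam : (L * lam) ^ q = L ^ q * lam ^ q := Real.mul_rpow hL.le hlam.le
  have hτ : 0 < q * η * lam - dq * (L * lam) ^ q := by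
    rw [hLlam, hlamsplit]; nlinarith
  have ht1 : t < 1 := lt_of_lt_of_le htlt (min_le_left _ _)
  have htτ : t * (q * η * lam - dq * (L * lam) ^ q) < 1 :=
    (lt_div_iff₀ hτ).mp (lt_of_lt_of_le htlt (min_le_right _ _))
  -- nonexpansiveness
  have hM : ‖T z - p‖ ≤ ‖z - p‖ := by
    have h := hT z p; rwa [hp] at h
  have hMq : ‖T z - p‖ ^ q ≤ ‖z - p‖ ^ q :=
    Real.rpow_le_rpow (norm_nonneg _) hM hq0.le
  have hc0 : 0 < t * lam := mul_pos ht0 hlam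
  -- decomposition of z - p
  have key1 : z - p = ((T z - p) + -((t * lam) • (A (T z) - A p))) + t • (u - lam • A p) := by
    nth_rewrite 1 [hz]; module
  have h1 := hsub ((T z - p) + -((t * lam) • (A (T z) - A p))) (t • (u - lam • A p))
  rw [← key1] at h1
  -- bound on the jq term
  have hJ : jq (z - p) (t • (u - lam • A p)) ≤
      t * (‖z - p‖ ^ (q - 1) * ‖u - lam • A p‖) := by
    rw [map_smul, smul_eq_mul]
    have h2 : jq (z - p) (u - lam • A p) ≤ ‖z - p‖ ^ (q - 1) * ‖u - lam • A p‖ := by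
      calc jq (z - p) (u - lam • A p) ≤ |jq (z - p) (u - lam • A p)| := le_abs_self _
        _ = ‖jq (z - p) (u - lam • A p)‖ := (Real.norm_eq_abs _).symm
        _ ≤ ‖jq (z - p)‖ * ‖u - lam • A p‖ := (jq (z - p)).le_opNorm _
        _ = ‖z - p‖ ^ (q - 1) * ‖u - lam • A p‖ := by rw [(hjq (z - p)).2]
    exact mul_le_mul_of_nonneg_left h2 ht0.le
  -- smoothness bound on the first summand
  have h3 := hsmooth (T z - p) (-((t * lam) • (A (T z) - A p)))
  have hjA : η * ‖T z - p‖ ^ q ≤ jq (T z - p) (A (T z) - A p) := hA (T z) p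
  have hjneg : jq (T z - p) (-((t * lam) • (A (T z) - A p))) =
      -((t * lam) * jq (T z - p) (A (T z) - A p)) := by
    rw [map_neg, map_smul, smul_eq_mul]
  have hdnorm : ‖-((t * lam) • (A (T z) - A p))‖ = (t * lam) * ‖A (T z) - A p‖ := by
    rw [norm_neg, norm_smul, Real.norm_of_nonneg hc0.le]
  have hdq2 : ‖-((t * lam) • (A (T z) - A p))‖ ^ q ≤
      t ^ q * ((L * lam) ^ q * ‖T z - p‖ ^ q) := by
    rw [hdnorm]
    have hle : (t * lam) * ‖A (T z) - A p‖ ≤ t * ((L * lam) * ‖T z - p‖) := by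
      have h := hLip (T z) p
      nlinarith
    calc ((t * lam) * ‖A (T z) - A p‖) ^ q ≤ (t * ((L * lam) * ‖T z - p‖)) ^ q :=
          Real.rpow_le_rpow (by positivity) hle hq0.le
      _ = t ^ q * ((L * lam) ^ q * ‖T z - p‖ ^ q) := by
          rw [Real.mul_rpow ht0.le (by positivity),
            Real.mul_rpow (by positivity) (norm_nonneg _)]
  have htq : t ^ q ≤ t := by
    have h := Real.rpow_le_rpow_of_exponent_ge ht0 ht1.le hq.le
    rwa [Real.rpow_one] at h
  rw [hjneg] at h3
  have hcalc : ‖(T z - p) + -((t * lam) • (A (T z) - A p))‖ ^ q ≤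
      (1 - t * (q * η * lam - dq * (L * lam) ^ q)) * ‖T z - p‖ ^ q := by
    have hint1 := mul_le_mul_of_nonneg_left hjA (mul_pos hq0 hc0).le
    have hint2 := mul_le_mul_of_nonneg_left hdq2 hdq.le
    have hint3 := mul_le_mul_of_nonneg_left
      (mul_le_mul_of_nonneg_right htq
        (by positivity : (0:ℝ) ≤ (L * lam) ^ q * ‖T z - p‖ ^ q)) hdq.le
    linarith [h3, hint1, hint2, hint3]
  have hcalcN : ‖(T z - p) + -((t * lam) • (A (T z) - A p))‖ ^ q ≤
      (1 - t * (q * η * lam - dq * (L * lam) ^ q)) * ‖z - p‖ ^ q := by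
    have hco : 0 ≤ 1 - t * (q * η * lam - dq * (L * lam) ^ q) := by linarith
    have := mul_le_mul_of_nonneg_left hMq hco
    linarith
  have main : t * ((q * η * lam - dq * (L * lam) ^ q) * ‖z - p‖ ^ q) ≤
      t * (q * (‖z - p‖ ^ (q - 1) * ‖u - lam • A p‖)) := by
    have hintJ := mul_le_mul_of_nonneg_left hJ hq0.le
    linarith [h1, hcalcN, hintJ]
  have main' : (q * η * lam - dq * (L * lam) ^ q) * ‖z - p‖ ^ q ≤
      q * (‖z - p‖ ^ (q - 1) * ‖u - lam • A p‖) :=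
    le_of_mul_le_mul_left main ht0
  rcases eq_or_lt_of_le (norm_nonneg (z - p)) with h0 | h0
  · rw [← h0]
    exact div_nonneg (mul_nonneg hq0.le (norm_nonneg _)) hτ.le
  · have hNq : ‖z - p‖ ^ q = ‖z - p‖ ^ (q - 1) * ‖z - p‖ := by
      rw [← Real.rpow_add_one h0.ne' (q - 1)]; congr 1; ring
    rw [hNq] at main'
    have hpos : 0 < ‖z - p‖ ^ (q - 1) := Real.rpow_pos_of_pos h0 _
    have key : (q * η * lam - dq * (L * lam) ^ q) * ‖z - p‖ ≤ q * ‖u - lam • A p‖ := by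
      have h'' : ‖z - p‖ ^ (q - 1) * ((q * η * lam - dq * (L * lam) ^ q) * ‖z - p‖) ≤
          ‖z - p‖ ^ (q - 1) * (q * ‖u - lam • A p‖) := by linarith [main']
      exact le_of_mul_le_mul_left h'' hpos
    rw [le_div_iff₀ hτ]
    linarith [key]
end

section
/- The map t ↦ z_t from (0, min{1, 1/(qηλ − d_q(Lλ)^q)}) to E, where z_t = t u + (I − tλA)Tz_t, is continuous; indeed for each fixed t₀ in this interval there is a constant M₁ > 0 with ‖z_t − z_{t₀}‖ ≤ (M₁ / (t₀(qηλ − d_q(Lλ)^q))) |t − t₀|. -/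
/-- Root extraction: if `x^q ≤ y^q` with nonneg bases and positive real exponent, then `x ≤ y`. -/
lemma rpow_le_of_rpow_le_aux {x y q : ℝ} (hy : 0 ≤ y) (hq : 0 < q)
    (h : x ^ q ≤ y ^ q) : x ≤ y := by
  by_contra hc
  push_neg at hc
  exact absurd h (not_le.2 (Real.rpow_lt_rpow hy hc hq))

/-- Bernoulli-type inequality: `1 - s ≤ (1 - s/q)^q` for `0 ≤ s ≤ 1 ≤ q`. -/
lemma bernoulli_aux {s q : ℝ} (hs0 : 0 ≤ s) (hs1 : s ≤ 1) (hq : 1 < q) :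
    (1 - s) ≤ (1 - s / q) ^ q := by
  have hqpos : (0 : ℝ) < q := by linarith
  have h1 : -1 ≤ -(s / q) := by
    have : s / q ≤ 1 := by
      rw [div_le_one hqpos]; linarith
    linarith
  have h2 := one_add_mul_self_le_rpow_one_add h1 hq.le
  have hrw : 1 + q * -(s / q) = 1 - s := by field_simp; ring
  have hrw2 : 1 + -(s / q) = 1 - s / q := by ring
  rw [hrw, hrw2] at h2
  exact h2

set_option maxHeartbeats 1000000 in
/-- The map `t ↦ z_t` is continuous on
`(0, min{1, 1/(qηλ - d_q(Lλ)^q)})`; indeed for each `t₀` in this interval there is a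
constant `M₁ > 0` with `‖z_t - z_{t₀}‖ ≤ (M₁/(t₀(qηλ - d_q(Lλ)^q))) |t - t₀|`. -/
theorem implicit_path_continuous
    {E : Type*} [NormedAddCommGroup E] [NormedSpace ℝ E]
    (q : ℝ) (hq : 1 < q) (jq : E → E →L[ℝ] ℝ)
    (hjq : ∀ z : E, jq z z = ‖z‖ ^ q ∧ ‖jq z‖ = ‖z‖ ^ (q - 1))
    (dq : ℝ) (hdq : 0 < dq)
    (hsmooth : ∀ x y : E, ‖x + y‖ ^ q ≤ ‖x‖ ^ q + q * jq x y + dq * ‖y‖ ^ q)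
    (hsub : ∀ x y : E, ‖x + y‖ ^ q ≤ ‖x‖ ^ q + q * jq (x + y) y)
    (A : E → E) (L : ℝ) (hL : 0 < L)
    (hLip : ∀ x y : E, ‖A x - A y‖ ≤ L * ‖x - y‖)
    (η : ℝ) (hη : 0 < η)
    (hA : ∀ x y : E, η * ‖x - y‖ ^ q ≤ jq (x - y) (A x - A y))
    (T : E → E) (hT : ∀ x y : E, ‖T x - T y‖ ≤ ‖x - y‖)
    (hF : ∃ p : E, T p = p)
    (u : E)
    (lam : ℝ) (hlam : 0 < lam) (hlam' : lam < (q * η / (L ^ q * dq)) ^ (1 / (q - 1)))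
    (z : ℝ → E)
    (hz : ∀ t ∈ Set.Ioo (0 : ℝ) (min 1 (1 / (q * η * lam - dq * (L * lam) ^ q))),
      z t = t • u + (T (z t) - (t * lam) • A (T (z t)))) :
    ContinuousOn z (Set.Ioo (0 : ℝ) (min 1 (1 / (q * η * lam - dq * (L * lam) ^ q)))) ∧
    ∀ t₀ ∈ Set.Ioo (0 : ℝ) (min 1 (1 / (q * η * lam - dq * (L * lam) ^ q))),
      ∃ M₁ > (0 : ℝ),
        ∀ t ∈ Set.Ioo (0 : ℝ) (min 1 (1 / (q * η * lam - dq * (L * lam) ^ q))),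
          ‖z t - z t₀‖ ≤ M₁ / (t₀ * (q * η * lam - dq * (L * lam) ^ q)) * |t - t₀| := by
  have hq0 : (0 : ℝ) < q := by linarith
  have hLq : (0 : ℝ) < L ^ q := Real.rpow_pos_of_pos hL q
  have hlamq0 : (0 : ℝ) < lam ^ q := Real.rpow_pos_of_pos hlam q
  -- the key positive constant
  obtain ⟨τ, hτdef⟩ : ∃ τ : ℝ, τ = q * η * lam - dq * (L * lam) ^ q := ⟨_, rfl⟩
  rw [← hτdef] at hz ⊢
  -- (L * lam) ^ q = L ^ q * lam ^ q
  have hmulpow : (L * lam) ^ q = L ^ q * lam ^ q := Real.mul_rpow hL.le hlam.le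
  -- τ > 0
  have hτ : 0 < τ := by
    have hbase : 0 ≤ q * η / (L ^ q * dq) := div_nonneg (by positivity) (by positivity)
    have h := Real.rpow_lt_rpow hlam.le hlam' (by linarith : (0:ℝ) < q - 1)
    rw [← Real.rpow_mul hbase, one_div, inv_mul_cancel₀ (by linarith : q - 1 ≠ 0),
      Real.rpow_one] at h
    -- h : lam ^ (q - 1) < q * η / (L ^ q * dq)
    have h2 : lam ^ (q - 1) * (L ^ q * dq) < q * η := by
      rw [← lt_div_iff₀ (by positivity)]
      exact h
    have hlsplit : lam ^ q = lam ^ (q - 1) * lam := by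
      have h9 : lam ^ (q - 1 + 1) = lam ^ (q - 1) * lam := Real.rpow_add_one hlam.ne' _
      rw [show q - 1 + 1 = q by ring] at h9
      exact h9
    have hrwτ : τ = q * η * lam - lam ^ (q - 1) * (L ^ q * dq) * lam := by
      rw [hτdef, hmulpow, hlsplit]; ring
    have h10 := mul_lt_mul_of_pos_right h2 hlam
    rw [hrwτ]
    nlinarith [h10]
  -- key contraction estimate
  have key : ∀ s : ℝ, 0 < s → s ≤ 1 → s * τ ≤ 1 → ∀ a b : E,
      ‖(a - (s * lam) • A a) - (b - (s * lam) • A b)‖ ≤ (1 - s * τ / q) * ‖a - b‖ := by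
    intro s hs0 hs1 hsτ a b
    have hsτ0 : 0 ≤ s * τ := mul_nonneg hs0.le hτ.le
    have hθ0 : 0 ≤ 1 - s * τ / q := by
      rw [sub_nonneg, div_le_one hq0]
      linarith
    obtain ⟨x, hx⟩ : ∃ v : E, v = a - b := ⟨_, rfl⟩
    obtain ⟨w, hw⟩ : ∃ v : E, v = A a - A b := ⟨_, rfl⟩
    have hjw : η * ‖x‖ ^ q ≤ jq x w := by rw [hx, hw]; exact hA a b
    have hLxw : ‖w‖ ≤ L * ‖x‖ := by rw [hx, hw]; exact hLip a b
    have hrw : (a - (s * lam) • A a) - (b - (s * lam) • A b) = x + (-(s * lam)) • w := by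
      rw [hx, hw]
      module
    have hwle : ‖w‖ ^ q ≤ L ^ q * ‖x‖ ^ q := by
      calc ‖w‖ ^ q ≤ (L * ‖x‖) ^ q :=
            Real.rpow_le_rpow (norm_nonneg _) hLxw hq0.le
        _ = L ^ q * ‖x‖ ^ q := Real.mul_rpow hL.le (norm_nonneg _)
    have hsmul : jq x ((-(s * lam)) • w) = -(s * lam) * jq x w := by
      rw [map_smul]; rfl
    have hnorm_smul : ‖(-(s * lam)) • w‖ ^ q = s ^ q * lam ^ q * ‖w‖ ^ q := by
      rw [norm_smul, Real.norm_eq_abs, abs_neg,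
        abs_of_pos (by positivity : (0:ℝ) < s * lam),
        Real.mul_rpow (by positivity : (0:ℝ) ≤ s * lam) (norm_nonneg _),
        Real.mul_rpow hs0.le hlam.le]
    have hsq : s ^ q ≤ s := by
      have := Real.rpow_le_rpow_of_exponent_ge hs0 hs1 hq.le
      rwa [Real.rpow_one] at this
    have h1 := hsmooth x ((-(s * lam)) • w)
    rw [hsmul, hnorm_smul] at h1
    have hxq0 : 0 ≤ ‖x‖ ^ q := Real.rpow_nonneg (norm_nonneg _) q
    have hpow : ‖x + (-(s * lam)) • w‖ ^ q ≤ (1 - s * τ) * ‖x‖ ^ q := by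
      have hb1 : q * (-(s * lam) * jq x w) ≤ -(q * s * lam * η * ‖x‖ ^ q) := by
        have := mul_le_mul_of_nonneg_left hjw (by positivity : (0:ℝ) ≤ q * s * lam)
        nlinarith
      have hb2 : dq * (s ^ q * lam ^ q * ‖w‖ ^ q) ≤ s * (dq * L ^ q * lam ^ q) * ‖x‖ ^ q := by
        have h3 : s ^ q * (lam ^ q * ‖w‖ ^ q) ≤ s * (lam ^ q * (L ^ q * ‖x‖ ^ q)) := by
          apply mul_le_mul hsq (mul_le_mul_of_nonneg_left hwle hlamq0.le)
            (by positivity) hs0.le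
        nlinarith
      have hτx : (1 - s * τ) * ‖x‖ ^ q
          = ‖x‖ ^ q - q * s * lam * η * ‖x‖ ^ q + s * (dq * L ^ q * lam ^ q) * ‖x‖ ^ q := by
        rw [hτdef, hmulpow]; ring
      rw [hτx]
      linarith
    have hbern : (1 - s * τ) ≤ (1 - s * τ / q) ^ q := bernoulli_aux hsτ0 hsτ hq
    have hfin : ‖x + (-(s * lam)) • w‖ ^ q ≤ ((1 - s * τ / q) * ‖x‖) ^ q := by
      rw [Real.mul_rpow hθ0 (norm_nonneg _)]
      calc ‖x + (-(s * lam)) • w‖ ^ q ≤ (1 - s * τ) * ‖x‖ ^ q := hpow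
        _ ≤ (1 - s * τ / q) ^ q * ‖x‖ ^ q := mul_le_mul_of_nonneg_right hbern hxq0
    have hroot := rpow_le_of_rpow_le_aux (mul_nonneg hθ0 (norm_nonneg _)) hq0 hfin
    rw [hrw, ← hx]
    exact hroot
  -- membership gives the basic parameter bounds
  have hmem : ∀ t ∈ Set.Ioo (0:ℝ) (min 1 (1/τ)), 0 < t ∧ t ≤ 1 ∧ t * τ ≤ 1 := by
    intro t ht
    obtain ⟨ht0, ht1⟩ := ht
    refine ⟨ht0, le_of_lt (lt_of_lt_of_le ht1 (min_le_left _ _)), ?_⟩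
    have h2 : t < 1 / τ := lt_of_lt_of_le ht1 (min_le_right _ _)
    rw [lt_div_iff₀ hτ] at h2
    linarith
  -- uniform boundedness of z
  obtain ⟨p, hp⟩ := hF
  obtain ⟨C₀, hC₀⟩ : ∃ c : ℝ, c = ‖u - lam • A p‖ := ⟨_, rfl⟩
  have hC₀0 : 0 ≤ C₀ := hC₀ ▸ norm_nonneg _
  obtain ⟨B, hB⟩ : ∃ b : ℝ, b = q * C₀ / τ := ⟨_, rfl⟩
  have hB0 : 0 ≤ B := hB ▸ div_nonneg (by positivity) hτ.le
  have hzb : ∀ t ∈ Set.Ioo (0:ℝ) (min 1 (1/τ)), ‖z t - p‖ ≤ B := by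
    intro t ht
    obtain ⟨ht0, ht1, htτ⟩ := hmem t ht
    have hid : z t - p = t • (u - lam • A p) +
        ((T (z t) - (t * lam) • A (T (z t))) - (p - (t * lam) • A p)) := by
      nth_rewrite 1 [hz t ht]
      module
    have hθ0 : 0 ≤ 1 - t * τ / q := by
      rw [sub_nonneg, div_le_one hq0]
      linarith
    have hstep : ‖(T (z t) - (t * lam) • A (T (z t))) - (p - (t * lam) • A p)‖
        ≤ (1 - t * τ / q) * ‖z t - p‖ := by
      calc ‖(T (z t) - (t * lam) • A (T (z t))) - (p - (t * lam) • A p)‖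
          ≤ (1 - t * τ / q) * ‖T (z t) - p‖ := key t ht0 ht1 htτ (T (z t)) p
        _ ≤ (1 - t * τ / q) * ‖z t - p‖ := by
            apply mul_le_mul_of_nonneg_left _ hθ0
            calc ‖T (z t) - p‖ = ‖T (z t) - T p‖ := by rw [hp]
              _ ≤ ‖z t - p‖ := hT _ _
    have hD : ‖z t - p‖ ≤ t * C₀ + (‖z t - p‖ - t * τ / q * ‖z t - p‖) := by
      have hcalc : ‖z t - p‖ ≤ t * C₀ + (1 - t * τ / q) * ‖z t - p‖ := by
        calc ‖z t - p‖ ≤ ‖t • (u - lam • A p)‖ +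
              ‖(T (z t) - (t * lam) • A (T (z t))) - (p - (t * lam) • A p)‖ := by
              rw [hid]; exact norm_add_le _ _
          _ ≤ t * C₀ + (1 - t * τ / q) * ‖z t - p‖ := by
              rw [norm_smul, Real.norm_eq_abs, abs_of_pos ht0, hC₀]
              exact add_le_add (le_refl _) hstep
      have hexp : (1 - t * τ / q) * ‖z t - p‖
          = ‖z t - p‖ - t * τ / q * ‖z t - p‖ := by ring
      rwa [hexp] at hcalc
    have h5 : t * τ / q * ‖z t - p‖ ≤ t * C₀ := by linarith
    have h6 : q * (t * τ / q * ‖z t - p‖) = t * (τ * ‖z t - p‖) := by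
      field_simp
    have h6b : q * (t * C₀) = t * (q * C₀) := by ring
    have h7 := mul_le_mul_of_nonneg_left h5 hq0.le
    rw [h6, h6b] at h7
    have h8 : τ * ‖z t - p‖ ≤ q * C₀ := le_of_mul_le_mul_left h7 ht0
    rw [hB, le_div_iff₀ hτ]
    linarith
  -- the main local Lipschitz estimate
  have main : ∀ t₀ ∈ Set.Ioo (0:ℝ) (min 1 (1/τ)), ∃ M₁ > (0 : ℝ),
      ∀ t ∈ Set.Ioo (0:ℝ) (min 1 (1/τ)),
      ‖z t - z t₀‖ ≤ M₁ / (t₀ * τ) * |t - t₀| := by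
    intro t₀ ht₀
    obtain ⟨ht₀0, ht₀1, ht₀τ⟩ := hmem t₀ ht₀
    obtain ⟨C, hC⟩ : ∃ c : ℝ, c = ‖u‖ + lam * (L * B + ‖A p‖) := ⟨_, rfl⟩
    have hC0 : 0 ≤ C := by
      rw [hC]; positivity
    refine ⟨q * C + 1, by positivity, ?_⟩
    intro t ht
    obtain ⟨ht0, ht1, htτ⟩ := hmem t ht
    have hθ0 : 0 ≤ 1 - t₀ * τ / q := by
      rw [sub_nonneg, div_le_one hq0]
      linarith
    -- bound on ‖A (T (z t))‖
    have hATb : ‖A (T (z t))‖ ≤ L * B + ‖A p‖ := by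
      have hT1 : ‖T (z t) - p‖ ≤ ‖z t - p‖ := by
        calc ‖T (z t) - p‖ = ‖T (z t) - T p‖ := by rw [hp]
          _ ≤ ‖z t - p‖ := hT _ _
      have hzt := hzb t ht
      calc ‖A (T (z t))‖ ≤ ‖A (T (z t)) - A p‖ + ‖A p‖ := by
            simpa using norm_add_le (A (T (z t)) - A p) (A p)
        _ ≤ L * ‖T (z t) - p‖ + ‖A p‖ := by linarith [hLip (T (z t)) p]
        _ ≤ L * B + ‖A p‖ := by
            have := mul_le_mul_of_nonneg_left (hT1.trans hzt) hL.le
            linarith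
    -- the identity
    have hid : z t - z t₀ = (t - t₀) • u + (-((t - t₀) * lam)) • A (T (z t)) +
        ((T (z t) - (t₀ * lam) • A (T (z t))) - (T (z t₀) - (t₀ * lam) • A (T (z t₀)))) := by
      nth_rewrite 1 [hz t ht]
      nth_rewrite 1 [hz t₀ ht₀]
      module
    have hstep : ‖(T (z t) - (t₀ * lam) • A (T (z t))) - (T (z t₀) - (t₀ * lam) • A (T (z t₀)))‖
        ≤ (1 - t₀ * τ / q) * ‖z t - z t₀‖ := by
      calc ‖(T (z t) - (t₀ * lam) • A (T (z t))) - (T (z t₀) - (t₀ * lam) • A (T (z t₀)))‖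
          ≤ (1 - t₀ * τ / q) * ‖T (z t) - T (z t₀)‖ := key t₀ ht₀0 ht₀1 ht₀τ _ _
        _ ≤ (1 - t₀ * τ / q) * ‖z t - z t₀‖ :=
            mul_le_mul_of_nonneg_left (hT _ _) hθ0
    have hD : ‖z t - z t₀‖ ≤ |t - t₀| * C + (‖z t - z t₀‖ - t₀ * τ / q * ‖z t - z t₀‖) := by
      have hcalc : ‖z t - z t₀‖ ≤ |t - t₀| * C + (1 - t₀ * τ / q) * ‖z t - z t₀‖ := by
        calc ‖z t - z t₀‖ ≤ ‖(t - t₀) • u‖ + ‖(-((t - t₀) * lam)) • A (T (z t))‖ +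
              ‖(T (z t) - (t₀ * lam) • A (T (z t))) - (T (z t₀) - (t₀ * lam) • A (T (z t₀)))‖ := by
              rw [hid]; exact norm_add₃_le
          _ ≤ |t - t₀| * C + (1 - t₀ * τ / q) * ‖z t - z t₀‖ := by
              have e1 : ‖(t - t₀) • u‖ = |t - t₀| * ‖u‖ := by
                rw [norm_smul, Real.norm_eq_abs]
              have e2 : ‖(-((t - t₀) * lam)) • A (T (z t))‖
                  = |t - t₀| * lam * ‖A (T (z t))‖ := by
                rw [norm_smul, Real.norm_eq_abs, abs_neg, abs_mul, abs_of_pos hlam]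
              have e3 : |t - t₀| * lam * ‖A (T (z t))‖
                  ≤ |t - t₀| * (lam * (L * B + ‖A p‖)) := by
                have h0 : 0 ≤ |t - t₀| * lam := by positivity
                nlinarith
              rw [e1, e2, hC]
              nlinarith [abs_nonneg (t - t₀), norm_nonneg u]
      have hexp : (1 - t₀ * τ / q) * ‖z t - z t₀‖
          = ‖z t - z t₀‖ - t₀ * τ / q * ‖z t - z t₀‖ := by ring
      rwa [hexp] at hcalc
    have h5 : t₀ * τ / q * ‖z t - z t₀‖ ≤ |t - t₀| * C := by linarith
    have h6 : q * (t₀ * τ / q * ‖z t - z t₀‖) = t₀ * τ * ‖z t - z t₀‖ := by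
      field_simp
    have h6b : q * (|t - t₀| * C) = |t - t₀| * (q * C) := by ring
    have h7 := mul_le_mul_of_nonneg_left h5 hq0.le
    rw [h6, h6b] at h7
    rw [div_mul_eq_mul_div, le_div_iff₀ (by positivity : (0:ℝ) < t₀ * τ)]
    have h8 : |t - t₀| * (q * C) ≤ (q * C + 1) * |t - t₀| := by
      nlinarith [abs_nonneg (t - t₀)]
    calc ‖z t - z t₀‖ * (t₀ * τ) = t₀ * τ * ‖z t - z t₀‖ := by ring
      _ ≤ |t - t₀| * (q * C) := h7
      _ ≤ (q * C + 1) * |t - t₀| := h8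
  refine ⟨?_, main⟩
  -- continuity from the Lipschitz-type estimate
  intro t₀ ht₀
  obtain ⟨M₁, hM₁, hest⟩ := main t₀ ht₀
  obtain ⟨ht₀0, _, _⟩ := hmem t₀ ht₀
  have hK0 : 0 < M₁ / (t₀ * τ) := div_pos hM₁ (by positivity)
  rw [Metric.continuousWithinAt_iff]
  intro ε hε
  refine ⟨ε / (M₁ / (t₀ * τ)), div_pos hε hK0, ?_⟩
  intro x hx hdx
  have hb := hest x hx
  rw [Real.dist_eq] at hdx
  calc dist (z x) (z t₀) = ‖z x - z t₀‖ := dist_eq_norm _ _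
    _ ≤ M₁ / (t₀ * τ) * |x - t₀| := hb
    _ < M₁ / (t₀ * τ) * (ε / (M₁ / (t₀ * τ))) := mul_lt_mul_of_pos_left hdx hK0
    _ = ε := by field_simp
end

section
/- Let C be a closed convex nonempty subset of a strictly convex real Banach space E, let (T_i)_{i≥1} be nonexpansive mappings T_i : C → E with ⋂_{i=1}^∞ F(T_i) ≠ ∅, and let σ_i ∈ (0,1) with Σ_{i=1}^∞ σ_i = 1. Then T := Σ_{i=1}^∞ σ_i T_i : C → E is well defined, nonexpansive, and F(T) = ⋂_{i=1}^∞ F(T_i). -/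
/-- In a strictly convex real Banach space, if `(T_i)` are nonexpansive
maps from a closed convex nonempty `C` to `E` with a common fixed point and
`σ_i ∈ (0,1)` sum to `1`, then `T := Σ σ_i T_i` is well defined (the series converges),
nonexpansive, and `F(T) = ⋂ F(T_i)`. -/
theorem countable_convex_combination_nonexpansive
    {E : Type*} [NormedAddCommGroup E] [NormedSpace ℝ E] [CompleteSpace E]
    [StrictConvexSpace ℝ E]
    (C : Set E) (hC : IsClosed C) (hconv : Convex ℝ C) (hne : C.Nonempty)
    (T : ℕ → E → E)
    (hT : ∀ i, ∀ x ∈ C, ∀ y ∈ C, ‖T i x - T i y‖ ≤ ‖x - y‖)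
    (hF : (⋂ i, {x ∈ C | T i x = x}).Nonempty)
    (σ : ℕ → ℝ) (hσ : ∀ i, σ i ∈ Set.Ioo (0 : ℝ) 1)
    (hσsum : Summable σ) (hσ1 : ∑' i, σ i = 1) :
    (∀ x ∈ C, Summable (fun i => σ i • T i x)) ∧
    (∀ x ∈ C, ∀ y ∈ C, ‖(∑' i, σ i • T i x) - ∑' i, σ i • T i y‖ ≤ ‖x - y‖) ∧
    {x ∈ C | (∑' i, σ i • T i x) = x} = ⋂ i, {x ∈ C | T i x = x} := by
  obtain ⟨p, hp⟩ := hF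
  simp only [Set.mem_iInter, Set.mem_setOf_eq] at hp
  have hpC : p ∈ C := (hp 0).1
  have hpfix : ∀ i, T i p = p := fun i => (hp i).2
  -- bound on T i x
  have hbound : ∀ x ∈ C, ∀ i, ‖T i x‖ ≤ ‖x - p‖ + ‖p‖ := by
    intro x hx i
    have := hT i x hx p hpC
    rw [hpfix i] at this
    calc ‖T i x‖ = ‖(T i x - p) + p‖ := by rw [sub_add_cancel]
      _ ≤ ‖T i x - p‖ + ‖p‖ := norm_add_le _ _
      _ ≤ ‖x - p‖ + ‖p‖ := by linarith
  have hσpos : ∀ i, 0 < σ i := fun i => (hσ i).1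
  have hsum : ∀ x ∈ C, Summable (fun i => σ i • T i x) := by
    intro x hx
    apply Summable.of_norm
    refine Summable.of_nonneg_of_le (fun i => norm_nonneg _) ?_ (hσsum.mul_right (‖x - p‖ + ‖p‖))
    intro i
    rw [norm_smul, Real.norm_eq_abs, abs_of_pos (hσpos i)]
    exact mul_le_mul_of_nonneg_left (hbound x hx i) (hσpos i).le
  -- summability of differences
  have hsumd : ∀ x ∈ C, ∀ y ∈ C, Summable (fun i => σ i • (T i x - T i y)) := by
    intro x hx y hy
    have := (hsum x hx).sub (hsum y hy)
    simpa [smul_sub] using this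
  have htsumd : ∀ x ∈ C, ∀ y ∈ C,
      (∑' i, σ i • (T i x - T i y)) = (∑' i, σ i • T i x) - ∑' i, σ i • T i y := by
    intro x hx y hy
    rw [← Summable.tsum_sub (hsum x hx) (hsum y hy)]
    simp [smul_sub]
  have hnonexp : ∀ x ∈ C, ∀ y ∈ C,
      ‖(∑' i, σ i • T i x) - ∑' i, σ i • T i y‖ ≤ ‖x - y‖ := by
    intro x hx y hy
    rw [← htsumd x hx y hy]
    have hnorms : Summable (fun i => ‖σ i • (T i x - T i y)‖) := by
      refine Summable.of_nonneg_of_le (fun i => norm_nonneg _) ?_ (hσsum.mul_right ‖x - y‖)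
      intro i
      rw [norm_smul, Real.norm_eq_abs, abs_of_pos (hσpos i)]
      exact mul_le_mul_of_nonneg_left (hT i x hx y hy) (hσpos i).le
    calc ‖∑' i, σ i • (T i x - T i y)‖ ≤ ∑' i, ‖σ i • (T i x - T i y)‖ :=
          norm_tsum_le_tsum_norm hnorms
      _ ≤ ∑' i, σ i * ‖x - y‖ := by
          apply Summable.tsum_le_tsum _ hnorms (hσsum.mul_right _)
          intro i
          rw [norm_smul, Real.norm_eq_abs, abs_of_pos (hσpos i)]
          exact mul_le_mul_of_nonneg_left (hT i x hx y hy) (hσpos i).le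
      _ = ‖x - y‖ := by rw [tsum_mul_right, hσ1, one_mul]
  refine ⟨hsum, hnonexp, ?_⟩
  ext x
  simp only [Set.mem_iInter, Set.mem_setOf_eq]
  constructor
  · rintro ⟨hxC, hx⟩
    refine fun i => ⟨hxC, ?_⟩
    by_cases hxp : x = p
    · rw [hxp, hpfix]
    -- v j := T j x - p
    set v : ℕ → E := fun j => T j x - p with hv
    have hsv : Summable (fun j => σ j • v j) := by
      have := hsumd x hxC p hpC
      simpa [hv, hpfix] using this
    have htv : (∑' j, σ j • v j) = x - p := by
      have h2 := htsumd x hxC p hpC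
      simp only [hpfix] at h2
      calc (∑' j, σ j • v j) = ∑' j, σ j • T j x - ∑' j, σ j • p := h2
        _ = x - p := by rw [hx, Summable.tsum_smul_const hσsum, hσ1, one_smul]
    set r : ℝ := ‖x - p‖ with hr
    have hrpos : 0 < r := norm_pos_iff.2 (sub_ne_zero.2 hxp)
    have hvle : ∀ j, ‖v j‖ ≤ r := by
      intro j
      have := hT j x hxC p hpC
      rw [hpfix j] at this
      exact this
    have hnsle : ∀ j, ‖σ j • v j‖ ≤ σ j * r := by
      intro j
      rw [norm_smul, Real.norm_eq_abs, abs_of_pos (hσpos j)]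
      exact mul_le_mul_of_nonneg_left (hvle j) (hσpos j).le
    have hnorms : Summable (fun j => ‖σ j • v j‖) :=
      Summable.of_nonneg_of_le (fun j => norm_nonneg _) hnsle (hσsum.mul_right _)
    have hσr : (∑' j, σ j * r) = r := by rw [tsum_mul_right, hσ1, one_mul]
    have htsum_norm_ge : r ≤ ∑' j, ‖σ j • v j‖ := by
      calc r = ‖∑' j, σ j • v j‖ := by rw [htv]
        _ ≤ ∑' j, ‖σ j • v j‖ := norm_tsum_le_tsum_norm hnorms
    -- each norm equals σ j * r
    have hnorm_eq : ∀ j, ‖σ j • v j‖ = σ j * r := by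
      intro j
      by_contra hne'
      have hlt : ‖σ j • v j‖ < σ j * r := lt_of_le_of_ne (hnsle j) hne'
      have := Summable.tsum_lt_tsum_of_nonneg (fun b => norm_nonneg (σ b • v b)) hnsle hlt
        (hσsum.mul_right _)
      rw [hσr] at this
      linarith
    have hveq : ∀ j, ‖v j‖ = r := by
      intro j
      have := hnorm_eq j
      rw [norm_smul, Real.norm_eq_abs, abs_of_pos (hσpos j)] at this
      exact mul_left_cancel₀ (hσpos j).ne' this
    -- now show T i x = x
    classical
    set a : E := σ i • v i with ha
    set w : E := ∑' j, if j = i then 0 else σ j • v j with hw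
    have haw : a + w = x - p := by
      rw [ha, hw, ← htv, Summable.tsum_eq_add_tsum_ite hsv i]
    have hwnorms : Summable (fun j => ‖if j = i then (0:E) else σ j • v j‖) := by
      refine Summable.of_nonneg_of_le (fun j => norm_nonneg _) ?_ hnorms
      intro j
      split <;> simp [norm_nonneg]
    have hwle : ‖w‖ ≤ (1 - σ i) * r := by
      calc ‖w‖ ≤ ∑' j, ‖if j = i then (0:E) else σ j • v j‖ :=
            norm_tsum_le_tsum_norm hwnorms
        _ ≤ ∑' j, (if j = i then 0 else σ j * r) := by
            apply Summable.tsum_le_tsum _ hwnorms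
            · refine Summable.of_nonneg_of_le (fun j => ?_) (fun j => ?_) (hσsum.mul_right r)
              · split
                · exact le_refl _
                · exact mul_nonneg (hσpos j).le hrpos.le
              · split
                · exact mul_nonneg (hσpos j).le hrpos.le
                · exact le_refl _
            · intro j
              split
              · simp
              · exact hnsle j
        _ = (∑' j, σ j * r) - σ i * r := by
            have := Summable.tsum_eq_add_tsum_ite (hσsum.mul_right r) i
            linarith [this]
        _ = (1 - σ i) * r := by rw [hσr]; ring
    have hna : ‖a‖ = σ i * r := hnorm_eq i
    have hane : a ≠ 0 := by
      rw [← norm_pos_iff, hna]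
      exact mul_pos (hσpos i) hrpos
    have heq : ‖a + w‖ = ‖a‖ + ‖w‖ := by
      have h1 : ‖a + w‖ = r := by rw [haw]
      have h2 : ‖a + w‖ ≤ ‖a‖ + ‖w‖ := norm_add_le _ _
      have h3 : ‖a‖ + ‖w‖ ≤ σ i * r + (1 - σ i) * r := by
        rw [hna]; linarith
      nlinarith [norm_nonneg w]
    have hray : SameRay ℝ a w := sameRay_iff_norm_add.2 heq
    obtain ⟨t, ht0, htw⟩ := hray.exists_nonneg_left hane
    -- x - p = (1 + t) • a, and norms force (1+t) * σ i = 1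
    have hxp' : x - p = ((1 + t) * σ i) • v i := by
      rw [← haw, ← htw, ha, smul_smul]
      module
    have hts : (1 + t) * σ i = 1 := by
      have := congrArg norm hxp'
      rw [norm_smul, Real.norm_eq_abs, hveq i, ← hr] at this
      have habs : |(1 + t) * σ i| = (1 + t) * σ i := by
        apply abs_of_pos
        have h1t : (0:ℝ) < 1 + t := by linarith
        exact mul_pos h1t (hσpos i)
      rw [habs] at this
      nlinarith
    rw [hts, one_smul, hv] at hxp'
    exact sub_left_inj.mp hxp'.symm
  · intro h
    have hxC : x ∈ C := (h 0).1
    refine ⟨hxC, ?_⟩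
    have : ∀ i, σ i • T i x = σ i • x := fun i => by rw [(h i).2]
    calc (∑' i, σ i • T i x) = ∑' i, σ i • x := by simp_rw [this]
      _ = (∑' i, σ i) • x := Summable.tsum_smul_const hσsum x
      _ = x := by rw [hσ1, one_smul]
end

section
/- Let E be strictly convex, C ⊆ E closed convex, T₁,…,T_r : C → C nonexpansive with ⋂_{i=1}^r F(T_i) ≠ ∅, and S_i = (1−γ_i)I + γ_i T_i with 0 < γ_i < 1. Then ⋂_{i=1}^r F(S_i) = ⋂_{i=1}^r F(T_i) and ⋂_{i=1}^r F(S_i) = F(S_r S_{r−1} ⋯ S₁) = F(S₁ S_{r−1} ⋯ S₂) = ⋯ = F(S_{r−1} ⋯ S₁ S_r). -/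
private lemma foldl_comp_eq {E : Type*} (L : List (E → E)) (g : E → E) :
    L.foldl (fun g f => f ∘ g) g = (L.foldl (fun g f => f ∘ g) id) ∘ g := by
  induction L generalizing g with
  | nil => simp
  | cons f L ih =>
    simp only [List.foldl_cons]
    rw [ih (f ∘ g), ih (f ∘ id)]
    rfl

private lemma chain_lemma {E : Type*} [NormedAddCommGroup E] (C : Set E) (p : E)
    (L : List (E → E))
    (hL : ∀ f ∈ L, (∀ x ∈ C, f x ∈ C) ∧ ∀ x ∈ C, ‖f x - p‖ ≤ ‖x - p‖) :
    ∀ y ∈ C, (L.foldl (fun g f => f ∘ g) id) y ∈ C ∧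
      ‖(L.foldl (fun g f => f ∘ g) id) y - p‖ ≤ ‖y - p‖ := by
  induction L with
  | nil => intro y hy; simpa using hy
  | cons f L ih =>
    intro y hy
    have hf := hL f (List.mem_cons_self : f ∈ f :: L)
    have hrest : ∀ g ∈ L, (∀ x ∈ C, g x ∈ C) ∧ ∀ x ∈ C, ‖g x - p‖ ≤ ‖x - p‖ :=
      fun g hg => hL g (List.mem_cons_of_mem f hg)
    have hfy : f y ∈ C := hf.1 y hy
    have := ih hrest (f y) hfy
    simp only [List.foldl_cons, foldl_comp_eq L (f ∘ id)]
    refine ⟨this.1, this.2.trans (hf.2 y hy)⟩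

private lemma fixed_lemma {E : Type*} [NormedAddCommGroup E] (C : Set E) (p : E)
    (L : List (E → E))
    (hL : ∀ f ∈ L, (∀ x ∈ C, f x ∈ C) ∧ (∀ x ∈ C, ‖f x - p‖ ≤ ‖x - p‖) ∧
      (∀ x ∈ C, ‖f x - p‖ = ‖x - p‖ → f x = x)) :
    ∀ x ∈ C, (L.foldl (fun g f => f ∘ g) id) x = x → ∀ f ∈ L, f x = x := by
  induction L with
  | nil => intro x _ _ f hf; exact absurd hf List.not_mem_nil
  | cons f L ih =>
    intro x hx hfix g hg
    have hf := hL f (List.mem_cons_self : f ∈ f :: L)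
    have hrest : ∀ g ∈ L, (∀ x ∈ C, g x ∈ C) ∧ (∀ x ∈ C, ‖g x - p‖ ≤ ‖x - p‖) ∧
        (∀ x ∈ C, ‖g x - p‖ = ‖x - p‖ → g x = x) :=
      fun g hg => hL g (List.mem_cons_of_mem f hg)
    have hfx : f x ∈ C := hf.1 x hx
    have hfix' : (L.foldl (fun g f => f ∘ g) id) (f x) = x := by
      have : (f :: L).foldl (fun g f => f ∘ g) id x =
          (L.foldl (fun g f => f ∘ g) id) (f x) := by
        simp only [List.foldl_cons, foldl_comp_eq L (f ∘ id)]; rfl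
      rw [← this]; exact hfix
    have hchain := chain_lemma C p L (fun g hg => ⟨(hrest g hg).1, (hrest g hg).2.1⟩)
      (f x) hfx
    have heq : ‖f x - p‖ = ‖x - p‖ := by
      refine le_antisymm (hf.2.1 x hx) ?_
      calc ‖x - p‖ = ‖(L.foldl (fun g f => f ∘ g) id) (f x) - p‖ := by rw [hfix']
        _ ≤ ‖f x - p‖ := hchain.2
    have hfxx : f x = x := hf.2.2 x hx heq
    rcases List.mem_cons.mp hg with rfl | hg'
    · exact hfxx
    · exact ih hrest x hx (by rwa [hfxx] at hfix') g hg'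

/-- For nonexpansive `T₁,…,T_r : C → C` in a strictly convex space with
`⋂ F(T_i) ≠ ∅` and `S_i = (1-γ_i)I + γ_i T_i` (`0 < γ_i < 1`), one has
`⋂ F(S_i) = ⋂ F(T_i)` and `⋂ F(S_i)` equals the fixed point set of every cyclic
composition `S_{k+r} ⋯ S_{k+2} S_{k+1}` (indices mod `r`). -/
theorem cyclic_composition_fixed_points
    {E : Type*} [NormedAddCommGroup E] [NormedSpace ℝ E] [StrictConvexSpace ℝ E]
    (C : Set E) (hC : IsClosed C) (hconv : Convex ℝ C)
    (r : ℕ) (hr : 0 < r)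
    (T : Fin r → E → E)
    (hmaps : ∀ i, ∀ x ∈ C, T i x ∈ C)
    (hT : ∀ i, ∀ x ∈ C, ∀ y ∈ C, ‖T i x - T i y‖ ≤ ‖x - y‖)
    (hF : (⋂ i, {x ∈ C | T i x = x}).Nonempty)
    (γ : Fin r → ℝ) (hγ : ∀ i, γ i ∈ Set.Ioo (0 : ℝ) 1)
    (S : Fin r → E → E)
    (hS : ∀ i x, S i x = (1 - γ i) • x + γ i • T i x) :
    (⋂ i, {x ∈ C | S i x = x}) = (⋂ i, {x ∈ C | T i x = x}) ∧
    ∀ k : ℕ,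
      {x ∈ C | (((List.ofFn S).rotate k).foldl (fun g f => f ∘ g) id) x = x} =
        ⋂ i, {x ∈ C | S i x = x} := by
  obtain ⟨p, hp⟩ := hF
  simp only [Set.mem_iInter, Set.mem_setOf_eq] at hp
  have hpC : p ∈ C := (hp ⟨0, hr⟩).1
  have hTp : ∀ i, T i p = p := fun i => (hp i).2
  have hST : ∀ i x, S i x = x ↔ T i x = x := by
    intro i x
    have hγi := hγ i
    constructor
    · intro h
      rw [hS] at h
      have h2 : γ i • T i x = γ i • x := by
        calc γ i • T i x = ((1 - γ i) • x + γ i • T i x) - (1 - γ i) • x := by abel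
          _ = x - (1 - γ i) • x := by rw [h]
          _ = γ i • x := by module
      exact smul_right_injective E (ne_of_gt hγi.1) h2
    · intro h
      rw [hS, h]; module
  have hSmaps : ∀ i, ∀ x ∈ C, S i x ∈ C := by
    intro i x hx
    rw [hS]
    exact hconv hx (hmaps i x hx) (by linarith [(hγ i).2]) (le_of_lt (hγ i).1) (by ring)
  have hSp : ∀ i, S i p = p := fun i => (hST i p).mpr (hTp i)
  -- S i nonexpansive towards p
  have hSnon : ∀ i, ∀ x ∈ C, ‖S i x - p‖ ≤ ‖x - p‖ := by
    intro i x hx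
    have hTnon : ‖T i x - p‖ ≤ ‖x - p‖ := by
      have := hT i x hx p hpC
      rwa [hTp i] at this
    have hdecomp : S i x - p = (1 - γ i) • (x - p) + γ i • (T i x - p) := by
      rw [hS]; module
    rw [hdecomp]
    calc ‖(1 - γ i) • (x - p) + γ i • (T i x - p)‖
        ≤ ‖(1 - γ i) • (x - p)‖ + ‖γ i • (T i x - p)‖ := norm_add_le _ _
      _ = (1 - γ i) * ‖x - p‖ + γ i * ‖T i x - p‖ := by
          rw [norm_smul, norm_smul, Real.norm_of_nonneg (by linarith [(hγ i).2]),
            Real.norm_of_nonneg (le_of_lt (hγ i).1)]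
      _ ≤ (1 - γ i) * ‖x - p‖ + γ i * ‖x - p‖ := by
          have := (hγ i).1
          nlinarith
      _ = ‖x - p‖ := by ring
  -- strictness
  have hstrict : ∀ i, ∀ x ∈ C, ‖S i x - p‖ = ‖x - p‖ → S i x = x := by
    intro i x hx heq
    have hTnon : ‖T i x - p‖ ≤ ‖x - p‖ := by
      have := hT i x hx p hpC
      rwa [hTp i] at this
    have hdecomp : S i x - p = (1 - γ i) • (x - p) + γ i • (T i x - p) := by
      rw [hS]; module
    have hTe : T i x = x := by
      by_contra hne
      have hne' : x - p ≠ T i x - p := fun h => hne (by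
        have := sub_left_injective h; exact this.symm)
      have := norm_combo_lt_of_ne (a := 1 - γ i) (b := γ i) (le_refl ‖x - p‖) hTnon hne'
        (by linarith [(hγ i).2]) (hγ i).1 (by ring)
      rw [← hdecomp, heq] at this
      exact lt_irrefl _ this
    exact (hST i x).mpr hTe
  constructor
  · ext x
    simp only [Set.mem_iInter, Set.mem_setOf_eq]
    exact ⟨fun h => fun i => ⟨(h i).1, (hST i x).mp (h i).2⟩,
      fun h => fun i => ⟨(h i).1, (hST i x).mpr (h i).2⟩⟩
  · intro k
    set L := (List.ofFn S).rotate k with hL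
    have hmem : ∀ f ∈ L, ∃ i, f = S i := by
      intro f hf
      rw [hL, List.mem_rotate] at hf
      obtain ⟨i, hi⟩ := List.mem_ofFn.mp hf
      exact ⟨i, hi.symm⟩
    have hmem' : ∀ i, S i ∈ L := by
      intro i
      rw [hL, List.mem_rotate]
      exact List.mem_ofFn.mpr ⟨i, rfl⟩
    have hLP : ∀ f ∈ L, (∀ x ∈ C, f x ∈ C) ∧ (∀ x ∈ C, ‖f x - p‖ ≤ ‖x - p‖) ∧
        (∀ x ∈ C, ‖f x - p‖ = ‖x - p‖ → f x = x) := by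
      intro f hf
      obtain ⟨i, rfl⟩ := hmem f hf
      exact ⟨hSmaps i, hSnon i, hstrict i⟩
    ext x
    simp only [Set.mem_iInter, Set.mem_setOf_eq]
    constructor
    · intro ⟨hx, hfix⟩ i
      exact ⟨hx, fixed_lemma C p L hLP x hx hfix (S i) (hmem' i)⟩
    · intro h
      have hx : x ∈ C := (h ⟨0, hr⟩).1
      refine ⟨hx, ?_⟩
      have : ∀ M : List (E → E), (∀ f ∈ M, ∃ i, f = S i) →
          (M.foldl (fun g f => f ∘ g) id) x = x := by
        intro M
        induction M with
        | nil => intro _; rfl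
        | cons f M ih =>
          intro hM
          obtain ⟨i, rfl⟩ := hM f (List.mem_cons_self : f ∈ f :: M)
          simp only [List.foldl_cons, foldl_comp_eq M (S i ∘ id)]
          have h1 : S i x = x := (h i).2
          show (M.foldl (fun g f => f ∘ g) id) (S i x) = x
          rw [h1]
          exact ih (fun g hg => hM g (List.mem_cons_of_mem _ hg))
      exact this L hmem
end

section
/- In the explicit scheme x_{n+1} = α_{n+1}u + (I − α_{n+1}λA)T_{n+1}x_n (with T_n = T_{n mod r} cyclically from nonexpansive maps T₁,…,T_r having a common fixed point p), the sequence {x_n} is bounded: ‖x_n − p‖ ≤ max{‖x₀ − p‖, q‖u − λAp‖/(qηλ − d_q(Lλ)^q)} for all n ≥ 0. -/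
theorem cyclic_aux
    {E : Type*} [NormedAddCommGroup E] [NormedSpace ℝ E]
    (q : ℝ) (hq : 1 < q) (jq : E → E →L[ℝ] ℝ)
    (dq : ℝ) (hdq : 0 < dq)
    (hsmooth : ∀ x y : E, ‖x + y‖ ^ q ≤ ‖x‖ ^ q + q * jq x y + dq * ‖y‖ ^ q)
    (A : E → E) (L : ℝ) (hL : 0 < L)
    (hLip : ∀ x y : E, ‖A x - A y‖ ≤ L * ‖x - y‖)
    (η : ℝ) (hη : 0 < η)
    (hA : ∀ x y : E, η * ‖x - y‖ ^ q ≤ jq (x - y) (A x - A y))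
    (p u : E) (lam : ℝ) (hlam : 0 < lam)
    (hτ : 0 < q * η * lam - dq * (L * lam) ^ q)
    (a : ℝ) (ha0 : 0 < a) (ha1 : a < 1)
    (haτ : a * (q * η * lam - dq * (L * lam) ^ q) < 1)
    (w : E) :
    ‖a • u + (w - (a * lam) • A w) - p‖
      ≤ (1 - a * (q * η * lam - dq * (L * lam) ^ q) / q) * ‖w - p‖
        + a * ‖u - lam • A p‖ := by
  have hq0 : (0:ℝ) < q := by linarith
  set τ := q * η * lam - dq * (L * lam) ^ q with hτdef
  set v := (w - p) + -((a * lam) • (A w - A p)) with hv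
  have hdecomp : a • u + (w - (a * lam) • A w) - p = a • (u - lam • A p) + v := by
    rw [hv]; module
  have hkey : ‖v‖ ^ q ≤ (1 - a * τ) * ‖w - p‖ ^ q := by
    have h1 := hsmooth (w - p) (-((a * lam) • (A w - A p)))
    rw [← hv] at h1
    have hj : (jq (w - p)) (-((a * lam) • (A w - A p)))
        = -((a * lam) * (jq (w - p)) (A w - A p)) := by
      rw [map_neg, map_smul, smul_eq_mul]
    have hA' : η * ‖w - p‖ ^ q ≤ (jq (w - p)) (A w - A p) := hA w p
    have hnorm : ‖-((a * lam) • (A w - A p))‖ = (a * lam) * ‖A w - A p‖ := by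
      rw [norm_neg, norm_smul, Real.norm_eq_abs, abs_of_pos (by positivity)]
    have hAL : ‖A w - A p‖ ≤ L * ‖w - p‖ := hLip w p
    have hns : ‖-((a * lam) • (A w - A p))‖ ^ q ≤ a ^ q * ((L * lam) ^ q * ‖w - p‖ ^ q) := by
      rw [hnorm]
      have e1 : (a * lam) * ‖A w - A p‖ ≤ (a * (L * lam)) * ‖w - p‖ := by
        have := mul_le_mul_of_nonneg_left hAL (show (0:ℝ) ≤ a * lam by positivity)
        calc (a * lam) * ‖A w - A p‖ ≤ (a * lam) * (L * ‖w - p‖) := this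
        _ = (a * (L * lam)) * ‖w - p‖ := by ring
      calc ((a * lam) * ‖A w - A p‖) ^ q ≤ ((a * (L * lam)) * ‖w - p‖) ^ q :=
            Real.rpow_le_rpow (by positivity) e1 hq0.le
      _ = a ^ q * ((L * lam) ^ q * ‖w - p‖ ^ q) := by
            rw [Real.mul_rpow (by positivity) (norm_nonneg _),
              Real.mul_rpow ha0.le (by positivity), mul_assoc]
    have hapow : a ^ q ≤ a := by
      have e : a ^ q = a ^ (q - 1) * a := by
        rw [← Real.rpow_add_one ha0.ne' (q - 1), sub_add_cancel]
      rw [e]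
      have h1' := Real.rpow_le_one ha0.le ha1.le (by linarith : (0:ℝ) ≤ q - 1)
      nlinarith
    have hyq : (0:ℝ) ≤ ‖w - p‖ ^ q := Real.rpow_nonneg (norm_nonneg _) q
    have hLlq : (0:ℝ) ≤ (L * lam) ^ q := Real.rpow_nonneg (by positivity) q
    rw [hj] at h1
    have e1 : q * -((a * lam) * (jq (w - p)) (A w - A p))
        ≤ -(q * (a * lam) * (η * ‖w - p‖ ^ q)) := by
      have := mul_le_mul_of_nonneg_left hA' (show (0:ℝ) ≤ q * (a * lam) by positivity)
      nlinarith
    have e2 : dq * ‖-((a * lam) • (A w - A p))‖ ^ q ≤ dq * (a * ((L * lam) ^ q * ‖w - p‖ ^ q)) := by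
      apply mul_le_mul_of_nonneg_left _ hdq.le
      calc ‖-((a * lam) • (A w - A p))‖ ^ q ≤ a ^ q * ((L * lam) ^ q * ‖w - p‖ ^ q) := hns
      _ ≤ a * ((L * lam) ^ q * ‖w - p‖ ^ q) :=
          mul_le_mul_of_nonneg_right hapow (by positivity)
    calc ‖v‖ ^ q ≤ ‖w - p‖ ^ q + q * -((a * lam) * (jq (w - p)) (A w - A p))
          + dq * ‖-((a * lam) • (A w - A p))‖ ^ q := h1
    _ ≤ ‖w - p‖ ^ q - q * (a * lam) * (η * ‖w - p‖ ^ q)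
          + dq * (a * ((L * lam) ^ q * ‖w - p‖ ^ q)) := by linarith
    _ = (1 - a * τ) * ‖w - p‖ ^ q := by rw [hτdef]; ring
  have hb : (0:ℝ) ≤ 1 - a * τ / q := by
    have h2 : a * τ / q ≤ 1 := by
      rw [div_le_one hq0]; nlinarith
    linarith
  have hvle : ‖v‖ ≤ (1 - a * τ / q) * ‖w - p‖ := by
    rw [← Real.rpow_le_rpow_iff (norm_nonneg _) (by positivity) hq0]
    have hbern : 1 - a * τ ≤ (1 - a * τ / q) ^ q := by
      have hb2 := one_add_mul_self_le_rpow_one_add (s := -(a * τ) / q)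
        (by rw [neg_div, neg_le, neg_neg]
            have h2 : a * τ / q ≤ 1 := by rw [div_le_one hq0]; nlinarith
            linarith) hq.le
      have e3 : 1 + q * (-(a * τ) / q) = 1 - a * τ := by field_simp; ring
      have e4 : 1 + -(a * τ) / q = 1 - a * τ / q := by ring
      rw [e3, e4] at hb2
      exact hb2
    calc ‖v‖ ^ q ≤ (1 - a * τ) * ‖w - p‖ ^ q := hkey
    _ ≤ (1 - a * τ / q) ^ q * ‖w - p‖ ^ q :=
        mul_le_mul_of_nonneg_right hbern (Real.rpow_nonneg (norm_nonneg _) q)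
    _ = ((1 - a * τ / q) * ‖w - p‖) ^ q := (Real.mul_rpow hb (norm_nonneg _)).symm
  calc ‖a • u + (w - (a * lam) • A w) - p‖ = ‖a • (u - lam • A p) + v‖ := by rw [hdecomp]
  _ ≤ ‖a • (u - lam • A p)‖ + ‖v‖ := norm_add_le _ _
  _ ≤ a * ‖u - lam • A p‖ + (1 - a * τ / q) * ‖w - p‖ := by
      rw [norm_smul, Real.norm_eq_abs, abs_of_pos ha0]
      linarith
  _ = (1 - a * τ / q) * ‖w - p‖ + a * ‖u - lam • A p‖ := by ring


/-- In the cyclic explicit scheme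
`x_{n+1} = α_{n+1} u + (I - α_{n+1} λ A) T_{n+1} x_n` (with `T_n = T_{n mod r}`),
the sequence is bounded:
`‖x_n - p‖ ≤ max{‖x₀ - p‖, q‖u - λAp‖/(qηλ - d_q(Lλ)^q)}` for all `n`. -/
theorem cyclic_explicit_scheme_bounded
    {E : Type*} [NormedAddCommGroup E] [NormedSpace ℝ E]
    (q : ℝ) (hq : 1 < q) (jq : E → E →L[ℝ] ℝ)
    (hjq : ∀ z : E, jq z z = ‖z‖ ^ q ∧ ‖jq z‖ = ‖z‖ ^ (q - 1))
    (dq : ℝ) (hdq : 0 < dq)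
    (hsmooth : ∀ x y : E, ‖x + y‖ ^ q ≤ ‖x‖ ^ q + q * jq x y + dq * ‖y‖ ^ q)
    (hsub : ∀ x y : E, ‖x + y‖ ^ q ≤ ‖x‖ ^ q + q * jq (x + y) y)
    (A : E → E) (L : ℝ) (hL : 0 < L)
    (hLip : ∀ x y : E, ‖A x - A y‖ ≤ L * ‖x - y‖)
    (η : ℝ) (hη : 0 < η)
    (hA : ∀ x y : E, η * ‖x - y‖ ^ q ≤ jq (x - y) (A x - A y))
    (r : ℕ) (hr : 0 < r)
    (T : Fin r → E → E)
    (hT : ∀ i, ∀ x y : E, ‖T i x - T i y‖ ≤ ‖x - y‖)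
    (p : E) (hp : ∀ i, T i p = p)
    (u : E)
    (lam : ℝ) (hlam : 0 < lam) (hlam' : lam < (q * η / (L ^ q * dq)) ^ (1 / (q - 1)))
    (α : ℕ → ℝ)
    (hα : ∀ n, α n ∈ Set.Ioo (0 : ℝ) (min 1 (1 / (q * η * lam - dq * (L * lam) ^ q))))
    (x : ℕ → E)
    (hx : ∀ n, x (n + 1) =
      α (n + 1) • u +
        (T ⟨(n + 1) % r, Nat.mod_lt _ hr⟩ (x n) -
          (α (n + 1) * lam) • A (T ⟨(n + 1) % r, Nat.mod_lt _ hr⟩ (x n)))) :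
    ∀ n, ‖x n - p‖ ≤
      max ‖x 0 - p‖ (q * ‖u - lam • A p‖ / (q * η * lam - dq * (L * lam) ^ q)) := by
  have hq0 : (0:ℝ) < q := by linarith
  have hLq : (0:ℝ) < L ^ q := Real.rpow_pos_of_pos hL q
  have h5 : (L * lam) ^ q = L ^ q * lam ^ q := Real.mul_rpow hL.le hlam.le
  have h4 : lam ^ q = lam ^ (q - 1) * lam := by
    rw [← Real.rpow_add_one hlam.ne' (q - 1), sub_add_cancel]
  have hτ : 0 < q * η * lam - dq * (L * lam) ^ q := by
    have hc : (0:ℝ) < q * η / (L ^ q * dq) := by positivity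
    have h1 : lam ^ (q - 1) < q * η / (L ^ q * dq) := by
      have h2 := Real.rpow_lt_rpow hlam.le hlam' (by linarith : (0:ℝ) < q - 1)
      rwa [← Real.rpow_mul hc.le, one_div_mul_cancel (by intro h; linarith : q - 1 ≠ 0),
        Real.rpow_one] at h2
    have h3 : lam ^ (q - 1) * (L ^ q * dq) < q * η := (lt_div_iff₀ (by positivity)).mp h1
    have hlp : (0:ℝ) ≤ lam ^ (q - 1) := Real.rpow_nonneg hlam.le _
    rw [h5, h4]
    nlinarith [hlam]
  intro n
  induction n with
  | zero => exact le_max_left _ _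
  | succ n ih =>
    obtain ⟨ha0, ha1⟩ := hα (n + 1)
    have ha1' : α (n + 1) < 1 := lt_of_lt_of_le ha1 (min_le_left _ _)
    have haτ : α (n + 1) * (q * η * lam - dq * (L * lam) ^ q) < 1 := by
      have h := lt_of_lt_of_le ha1 (min_le_right _ _)
      rw [lt_div_iff₀ hτ] at h; exact h
    have hyp : ‖T ⟨(n + 1) % r, Nat.mod_lt _ hr⟩ (x n) - p‖ ≤ ‖x n - p‖ := by
      calc ‖T ⟨(n + 1) % r, Nat.mod_lt _ hr⟩ (x n) - p‖
          = ‖T ⟨(n + 1) % r, Nat.mod_lt _ hr⟩ (x n) - T ⟨(n + 1) % r, Nat.mod_lt _ hr⟩ p‖ := by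
            rw [hp]
      _ ≤ ‖x n - p‖ := hT _ _ _
    have hstep := cyclic_aux q hq jq dq hdq hsmooth A L hL hLip η hη hA p u lam hlam hτ
      (α (n + 1)) ha0 ha1' haτ (T ⟨(n + 1) % r, Nat.mod_lt _ hr⟩ (x n))
    set M := max ‖x 0 - p‖ (q * ‖u - lam • A p‖ / (q * η * lam - dq * (L * lam) ^ q)) with hM
    have hKM : q * ‖u - lam • A p‖ / (q * η * lam - dq * (L * lam) ^ q) ≤ M := le_max_right _ _
    have hcoef : α (n + 1) * ‖u - lam • A p‖
        = (α (n + 1) * (q * η * lam - dq * (L * lam) ^ q) / q)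
          * (q * ‖u - lam • A p‖ / (q * η * lam - dq * (L * lam) ^ q)) := by
      rw [eq_comm, div_mul_div_comm, div_eq_iff (mul_ne_zero hq0.ne' hτ.ne')]
      ring
    have hb : (0:ℝ) ≤ 1 - α (n + 1) * (q * η * lam - dq * (L * lam) ^ q) / q := by
      have h2 : α (n + 1) * (q * η * lam - dq * (L * lam) ^ q) / q ≤ 1 := by
        rw [div_le_one hq0]; nlinarith
      linarith
    have haτ0 : 0 < α (n + 1) * (q * η * lam - dq * (L * lam) ^ q) / q := by positivity
    calc ‖x (n + 1) - p‖
        = ‖α (n + 1) • u + (T ⟨(n + 1) % r, Nat.mod_lt _ hr⟩ (x n)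
            - (α (n + 1) * lam) • A (T ⟨(n + 1) % r, Nat.mod_lt _ hr⟩ (x n))) - p‖ := by
          rw [hx n]
    _ ≤ (1 - α (n + 1) * (q * η * lam - dq * (L * lam) ^ q) / q)
          * ‖T ⟨(n + 1) % r, Nat.mod_lt _ hr⟩ (x n) - p‖
          + α (n + 1) * ‖u - lam • A p‖ := hstep
    _ ≤ (1 - α (n + 1) * (q * η * lam - dq * (L * lam) ^ q) / q) * M
          + (α (n + 1) * (q * η * lam - dq * (L * lam) ^ q) / q) * M := by
        rw [hcoef]
        apply add_le_add
        · exact mul_le_mul_of_nonneg_left (hyp.trans ih) hb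
        · exact mul_le_mul_of_nonneg_left hKM haτ0.le
    _ = M := by ring
end

section
/- If T : E → E is a k-strictly pseudocontractive mapping on a q-uniformly smooth real Banach space and 0 < a < (q k^{q−1}/d_q)^{1/(q−1)}, then T_a := (1−a)I + aT is nonexpansive, and F(T_a) = F(T). -/
/-- If `T` is `k`-strictly pseudocontractive on a `q`-uniformly smooth
space and `0 < a < (q k^(q-1)/d_q)^(1/(q-1))`, then `T_a := (1-a)I + aT` is
nonexpansive and `F(T_a) = F(T)`. -/
theorem strictly_pseudocontractive_average_nonexpansive
    {E : Type*} [NormedAddCommGroup E] [NormedSpace ℝ E]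
    (q : ℝ) (hq : 1 < q) (jq : E → E →L[ℝ] ℝ)
    (hjq : ∀ z : E, jq z z = ‖z‖ ^ q ∧ ‖jq z‖ = ‖z‖ ^ (q - 1))
    (dq : ℝ) (hdq : 0 < dq)
    (hsmooth : ∀ x y : E, ‖x + y‖ ^ q ≤ ‖x‖ ^ q + q * jq x y + dq * ‖y‖ ^ q)
    (T : E → E) (k : ℝ) (hk : k ∈ Set.Ioo (0 : ℝ) 1)
    (hpseudo : ∀ x y : E,
      k ^ (q - 1) * ‖(x - T x) - (y - T y)‖ ^ q ≤ jq (x - y) ((x - T x) - (y - T y)))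
    (a : ℝ) (ha : 0 < a) (ha' : a < (q * k ^ (q - 1) / dq) ^ (1 / (q - 1))) :
    (∀ x y : E,
      ‖((1 - a) • x + a • T x) - ((1 - a) • y + a • T y)‖ ≤ ‖x - y‖) ∧
    (∀ x : E, (1 - a) • x + a • T x = x ↔ T x = x) := by

  have hq0 : 0 < q := lt_trans one_pos hq
  have hq1 : 0 < q - 1 := by linarith
  have hkq : 0 < k ^ (q - 1) := Real.rpow_pos_of_pos hk.1 _
  have hC : 0 < q * k ^ (q - 1) / dq := by positivity
  have haq : a ^ (q - 1) < q * k ^ (q - 1) / dq := by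
    have h3 : ((q * k ^ (q - 1) / dq) ^ (1 / (q - 1))) ^ (q - 1)
        = q * k ^ (q - 1) / dq := by
      rw [← Real.rpow_mul hC.le, one_div, inv_mul_cancel₀ (ne_of_gt hq1), Real.rpow_one]
    have h2' : a ^ (q-1) < ((q * k ^ (q - 1) / dq) ^ (1 / (q - 1))) ^ (q - 1) :=
      Real.rpow_lt_rpow ha.le ha' hq1
    rwa [h3] at h2'
  constructor
  · intro x y
    set u := x - y with hu
    set v := (x - T x) - (y - T y) with hv
    have heq : ((1 - a) • x + a • T x) - ((1 - a) • y + a • T y) = u + (-a) • v := by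
      rw [hu, hv]; module
    have hsm := hsmooth u ((-a) • v)
    have hjsmul : (jq u) ((-a) • v) = -a * (jq u) v := by
      rw [map_smul, smul_eq_mul]
    have hnorm : ‖(-a) • v‖ ^ q = a ^ q * ‖v‖ ^ q := by
      rw [norm_smul, Real.norm_eq_abs, abs_neg, abs_of_pos ha,
        Real.mul_rpow ha.le (norm_nonneg _)]
    have hps := hpseudo x y
    have hvnn : (0:ℝ) ≤ ‖v‖ ^ q := Real.rpow_nonneg (norm_nonneg _) _
    have haq' : a ^ q = a ^ (q-1) * a := by
      rw [← Real.rpow_add_one ha.ne' (q-1)]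
      norm_num
    rw [hjsmul, hnorm, haq'] at hsm
    have hdqAq : dq * a ^ (q-1) < q * k ^ (q-1) := by
      nlinarith [(lt_div_iff₀ hdq).mp haq]
    have key : ‖u + (-a) • v‖ ^ q ≤ ‖u‖ ^ q := by
      nlinarith [mul_le_mul_of_nonneg_left hps (mul_pos ha hq0).le,
        mul_le_mul_of_nonneg_right hdqAq.le (mul_nonneg ha.le hvnn),
        Real.rpow_nonneg (ha.le) (q-1)]
    rw [heq]
    by_contra h
    push_neg at h
    have := Real.rpow_lt_rpow (norm_nonneg u) h hq0
    linarith
  · intro x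
    constructor
    · intro h
      have h1 : a • (T x - x) = 0 := by
        have h2 : ((1 - a) • x + a • T x) - x = a • (T x - x) := by module
        rw [← h2, h, sub_self]
      rcases smul_eq_zero.mp h1 with h' | h'
      · exact absurd h' (ne_of_gt ha)
      · exact sub_eq_zero.mp h'
    · intro h; rw [h]; module
end
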